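/- arXiv:2206.03533 — 3 statements merged into one kernel-verified Lean document; each statement's English description precedes it below -/
import Mathlib

section
/- A commutative ring R is a DW-ring if and only if every FP-projective R-module is w-FP-projective. -/
open CategoryTheory

universe u

noncomputable section

variable (R : Type u) [CommRing R]

/-- The Ext group `Ext^n_R(M, N)` as an `R`-module (via `ModuleCat`). -/
def extMod (M N : Type u) [AddCommGroup M] [Module R M]
    [AddCommGroup N] [Module R N] (n : ℕ) : ModuleCat R :=
  ((Ext R (ModuleCat R) n).obj (Opposite.op (ModuleCat.of R M))).obj (ModuleCat.of R N)

/-- `J` is a Glaz–Vasconcelos ideal: finitely generated and the natural map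
`R → Hom_R(J, R)` is bijective. -/
def IsGVIdeal (J : Ideal R) : Prop :=
  J.FG ∧ Function.Bijective (fun r : R => (r • J.subtype : J →ₗ[R] R))

/-- A module is GV-torsion if every element is annihilated by some GV-ideal. -/
def IsGVTorsion (M : Type u) [AddCommGroup M] [Module R M] : Prop :=
  ∀ x : M, ∃ J : Ideal R, IsGVIdeal R J ∧ ∀ j ∈ J, j • x = 0

/-- An ideal `I` is a `w`-ideal if it is `w`-closed: whenever `J x ⊆ I` for some
GV-ideal `J`, one has `x ∈ I`. -/
def IsWIdeal (I : Ideal R) : Prop :=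
  ∀ (x : R) (J : Ideal R), IsGVIdeal R J → (∀ j ∈ J, j * x ∈ I) → x ∈ I

/-- `R` is a DW-ring if every maximal ideal is a `w`-ideal. -/
def IsDWRing : Prop :=
  ∀ m : Ideal R, m.IsMaximal → IsWIdeal R m

/-- `A` is absolutely `w`-pure if `Ext^1_R(N, A)` is GV-torsion for every
finitely presented module `N`. -/
def IsAbsolutelyWPure (A : Type u) [AddCommGroup A] [Module R A] : Prop :=
  ∀ (N : Type u) [AddCommGroup N] [Module R N], Module.FinitePresentation R N →
    IsGVTorsion R (extMod R N A 1)

/-- `M` is `w`-FP-projective if `Ext^1_R(M, A) = 0` for every absolutely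
`w`-pure module `A`. -/
def IsWFPProjective (M : Type u) [AddCommGroup M] [Module R M] : Prop :=
  ∀ (A : Type u) [AddCommGroup A] [Module R A], IsAbsolutelyWPure R A →
    Subsingleton (extMod R M A 1)

end
/-- `A` is absolutely pure (FP-injective) if `Ext^1_R(N, A) = 0` for every finitely
presented module `N`. -/
def IsAbsolutelyPure (R : Type u) [CommRing R]
    (A : Type u) [AddCommGroup A] [Module R A] : Prop :=
  ∀ (N : Type u) [AddCommGroup N] [Module R N], Module.FinitePresentation R N →
    Subsingleton (extMod R N A 1)

/-- `M` is FP-projective if `Ext^1_R(M, A) = 0` for every absolutely pure module `A`. -/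
def IsFPProjective (R : Type u) [CommRing R]
    (M : Type u) [AddCommGroup M] [Module R M] : Prop :=
  ∀ (A : Type u) [AddCommGroup A] [Module R A], IsAbsolutelyPure R A →
    Subsingleton (extMod R M A 1)

/-!
`R` is a DW-ring exactly when `R` is its only GV-ideal. In that case GV-torsion modules vanish,
so absolutely `w`-pure modules are absolutely pure and FP-projective modules are `w`-FP-projective.
Conversely, let `J ≠ R` be a GV-ideal. Then `J ≠ J²`: a finitely generated idempotent ideal is
generated by an idempotent `e`, and `1 - e` kills `J`. So `J → J/J²` is nonzero, and it does not
extend to `R` because `J` kills `J/J²`; hence `Ext¹(R/J, J/J²) ≠ 0`. But `R/J` is finitely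
presented, hence FP-projective, and `J/J²` is absolutely `w`-pure since `J` kills its `Ext` groups.
-/

open Limits

section Homology

variable {R : Type*} [Semiring R] {C : Type*} [Category C] [Preadditive C] [Linear R C]

theorem HomologicalComplex.smul_id_homology_eq_zero {ι : Type*} {c : ComplexShape ι}
    (K : HomologicalComplex C c) (i : ι) [K.HasHomology i] {r : R}
    (hr : ∀ j, r • 𝟙 (K.X j) = 0) : r • 𝟙 (K.homology i) = 0 := by
  have hsc : r • 𝟙 (K.sc i) = 0 := by ext <;> exact hr _
  change r • 𝟙 (K.sc i).homology = 0
  rw [← ShortComplex.homologyMap_id, ← ShortComplex.homologyMap_smul, hsc,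
    ShortComplex.homologyMap_zero]

end Homology

section Ext

variable {R : Type*} [CommRing R] {C : Type*} [Category C] [Abelian C] [Linear R C]
  [EnoughProjectives C]

theorem smul_id_ext_eq_zero (X : C) {A : C} (n : ℕ) {r : R} (hr : r • 𝟙 A = 0) :
    r • 𝟙 (((Ext R C n).obj (Opposite.op X)).obj A) = 0 := by
  let P := ProjectiveResolution.of X
  have hK : ∀ j, r • 𝟙 ((P.complex.linearYonedaObj R A).X j) = 0 := fun j => by
    refine ModuleCat.hom_ext (LinearMap.ext fun (f : P.complex.X j ⟶ A) => ?_)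
    change r • f = 0
    rw [← Category.comp_id f, ← Linear.comp_smul, hr, comp_zero]
  have hH := (P.complex.linearYonedaObj R A).smul_id_homology_eq_zero n (r := r) hK
  rw [← (P.isoExt n A).hom_inv_id, ← Category.id_comp (P.isoExt n A).inv, ← Category.assoc,
    ← Linear.smul_comp, ← Linear.comp_smul, hH, comp_zero, zero_comp]

theorem CategoryTheory.ProjectiveResolution.exists_d_comp_eq_of_subsingleton_ext {X A : C}
    (P : ProjectiveResolution X) (hext : Subsingleton (((Ext R C 1).obj (Opposite.op X)).obj A))
    (f : P.complex.X 1 ⟶ A) (hf : P.complex.d 2 1 ≫ f = 0) :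
    ∃ g : P.complex.X 0 ⟶ A, P.complex.d 1 0 ≫ g = f := by
  let K := P.complex.linearYonedaObj R A
  have hK : K.ExactAt 1 := by
    rw [HomologicalComplex.exactAt_iff_isZero_homology]
    exact IsZero.of_iso (ModuleCat.isZero_of_subsingleton _) (P.isoExt 1 A).symm
  rw [HomologicalComplex.exactAt_iff' K 0 1 2 (by simp) (by simp),
    ShortComplex.moduleCat_exact_iff] at hK
  exact hK f hf

end Ext

section

variable {R : Type u} [CommRing R]

/-- Compare `Q → Q ⧸ K` with a projective resolution `P` of `Q ⧸ K` through lifts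
`s : P₀ → Q` and `t : Q → P₀`: the cocycle `h ∘ s ∘ d` on `P₁` is a coboundary `g ∘ d`, and
`g ∘ t - h ∘ (s ∘ t - id)` extends `h`. -/
theorem Submodule.exists_extension_of_subsingleton_extMod {Q A : Type u} [AddCommGroup Q]
    [Module R Q] [Module.Projective R Q] [AddCommGroup A] [Module R A] (K : Submodule R Q)
    (hext : Subsingleton (extMod R (Q ⧸ K) A 1)) (h : K →ₗ[R] A) :
    ∃ g : Q →ₗ[R] A, g ∘ₗ K.subtype = h := by
  let P := ProjectiveResolution.of (ModuleCat.of R (Q ⧸ K))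
  let d := (P.complex.d 1 0).hom
  let π₀ : P.complex.X 0 →ₗ[R] Q ⧸ K := (P.π.f 0).hom
  have hπ₀ : Function.Surjective π₀ := (ModuleCat.epi_iff_surjective _).mp inferInstance
  obtain ⟨s, hs⟩ := Module.projective_lifting_property K.mkQ π₀ K.mkQ_surjective
  obtain ⟨t, ht⟩ := Module.projective_lifting_property π₀ K.mkQ hπ₀
  have hsd (y : P.complex.X 1) : s (d y) ∈ K := by
    rw [← Submodule.Quotient.mk_eq_zero, ← K.mkQ_apply, ← LinearMap.comp_apply, hs]
    exact congr($(P.complex_d_comp_π_f_zero).hom y)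
  have hst (q : Q) : s (t q) - q ∈ K := by
    rw [← Submodule.Quotient.mk_eq_zero, Submodule.Quotient.mk_sub, ← K.mkQ_apply,
      ← K.mkQ_apply, ← LinearMap.comp_apply, hs, ← LinearMap.comp_apply, ht, sub_self]
  let f : P.complex.X 1 ⟶ ModuleCat.of R A :=
    ModuleCat.ofHom (h ∘ₗ (s ∘ₗ d).codRestrict K hsd)
  have hf : P.complex.d 2 1 ≫ f = 0 := by
    ext y
    have hdd : (s ∘ₗ d).codRestrict K hsd ((P.complex.d 2 1).hom y) = 0 :=
      Subtype.ext <| by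
        change s ((P.complex.d 2 1 ≫ P.complex.d 1 0).hom y) = 0
        rw [P.complex.d_comp_d]
        simp
    simp [f, hdd]
  obtain ⟨g, hg⟩ := P.exists_d_comp_eq_of_subsingleton_ext hext f hf
  refine ⟨g.hom ∘ₗ t - h ∘ₗ (s ∘ₗ t - LinearMap.id).codRestrict K hst, ?_⟩
  ext ⟨k, hk⟩
  obtain ⟨y, hy⟩ : ∃ y, d y = t k := by
    refine (ShortComplex.moduleCat_exact_iff _).mp P.exact₀ (t k) ?_
    change π₀ (t k) = 0
    rw [← LinearMap.comp_apply, ht, Submodule.mkQ_apply, Submodule.Quotient.mk_eq_zero]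
    exact hk
  have hgd : g.hom (d y) = h ⟨s (d y), hsd y⟩ := congr($(hg).hom y)
  simp only [LinearMap.sub_apply, LinearMap.comp_apply, Submodule.subtype_apply]
  rw [← hy, hgd, ← map_sub]
  congr 1
  ext
  simp [hy]

theorem IsGVIdeal.eq_top_of_isIdempotentElem {J : Ideal R} (hJ : IsGVIdeal R J)
    (hJJ : IsIdempotentElem J) : J = ⊤ := by
  obtain ⟨e, he, rfl⟩ := (Ideal.isIdempotentElem_iff_of_fg _ hJ.1).mp hJJ
  have h1e : 1 - e = 0 := hJ.2.1 <| by
    ext ⟨x, hx⟩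
    obtain ⟨r, rfl⟩ := Ideal.mem_span_singleton'.mp hx
    simp [sub_mul, mul_left_comm e r e, he.eq]
  rw [Ideal.span_singleton_eq_top, ← sub_eq_zero.mp h1e]
  exact isUnit_one

theorem isDWRing_iff_forall_isGVIdeal_eq_top :
    IsDWRing R ↔ ∀ J : Ideal R, IsGVIdeal R J → J = ⊤ := by
  constructor
  · intro hDW J hJ
    by_contra hJ_ne_top
    obtain ⟨m, hm, hJm⟩ := Ideal.exists_le_maximal J hJ_ne_top
    exact hm.ne_top <| (Ideal.eq_top_iff_one m).mpr <|
      hDW m hm 1 J hJ fun j hj => by simpa using hJm hj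
  · intro h m _ x J hJ hJx
    simpa using hJx 1 (by simp [h J hJ])

theorem isAbsolutelyPure_of_isAbsolutelyWPure (h : ∀ J : Ideal R, IsGVIdeal R J → J = ⊤)
    {A : Type u} [AddCommGroup A] [Module R A] (hA : IsAbsolutelyWPure R A) :
    IsAbsolutelyPure R A := by
  intro N _ _ hN
  refine subsingleton_of_forall_eq 0 fun x => ?_
  obtain ⟨J, hJ, hJx⟩ := hA N hN x
  simpa using hJx 1 (by simp [h J hJ])

theorem isAbsolutelyWPure_of_isTorsionBySet {J : Ideal R} (hJ : IsGVIdeal R J)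
    {A : Type u} [AddCommGroup A] [Module R A] (hA : Module.IsTorsionBySet R A J) :
    IsAbsolutelyWPure R A := by
  intro N _ _ _ x
  refine ⟨J, hJ, fun j hj => ?_⟩
  have hjA : j • 𝟙 (ModuleCat.of R A) = 0 := by
    ext a
    exact @hA a ⟨j, hj⟩
  exact congr($(smul_id_ext_eq_zero (ModuleCat.of R N) 1 hjA).hom x)

theorem isFPProjective_of_finitePresentation {M : Type u} [AddCommGroup M] [Module R M]
    (hM : Module.FinitePresentation R M) : IsFPProjective R M :=
  fun _ _ _ hA => hA M hM

theorem IsGVIdeal.eq_top_of_forall_isFPProjective_isWFPProjective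
    (H : ∀ (M : Type u) [AddCommGroup M] [Module R M], IsFPProjective R M → IsWFPProjective R M)
    {J : Ideal R} (hJ : IsGVIdeal R J) : J = ⊤ := by
  refine hJ.eq_top_of_isIdempotentElem (J.cotangent_subsingleton_iff.mp ?_)
  have hfp : Module.FinitePresentation R (R ⧸ J) :=
    Module.finitePresentation_of_surjective J.mkQ J.mkQ_surjective
      (by rw [Submodule.ker_mkQ]; exact hJ.1)
  have hext : Subsingleton (extMod R (R ⧸ J) J.Cotangent 1) :=
    H _ (isFPProjective_of_finitePresentation hfp) _
      (isAbsolutelyWPure_of_isTorsionBySet hJ J.isTorsionBySet_cotangent)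
  obtain ⟨g, hg⟩ := J.exists_extension_of_subsingleton_extMod hext J.toCotangent
  refine subsingleton_of_forall_eq 0 fun x => ?_
  obtain ⟨j, rfl⟩ := J.toCotangent_surjective x
  rw [← hg, LinearMap.comp_apply, Submodule.subtype_apply, ← mul_one (j : R), ← smul_eq_mul,
    map_smul]
  exact Ideal.Cotangent.smul_eq_zero_of_mem j.2 _

end

/-- `R` is a DW-ring iff every FP-projective module is `w`-FP-projective. -/
theorem isDWRing_iff_fpProjective_wFPProjective (R : Type u) [CommRing R] :
    IsDWRing R ↔
      ∀ (M : Type u) [AddCommGroup M] [Module R M],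
        IsFPProjective R M → IsWFPProjective R M := by
  rw [isDWRing_iff_forall_isGVIdeal_eq_top]
  exact ⟨fun h M _ _ hM A _ _ hA => hM A (isAbsolutelyPure_of_isAbsolutelyWPure h hA),
    fun H J hJ => hJ.eq_top_of_forall_isFPProjective_isWFPProjective H⟩
end

section
/- If M is a w-FP-projective R-module and P is a projective R-module, then P ⊗_R M is w-FP-projective. -/
open CategoryTheory

universe u

/-!
`Ext¹(X, A)` vanishes iff, for a projective presentation `0 → K → F → X → 0`, every map
`K → A` extends to `F`: compute `Ext` with a projective resolution that begins with `F → X`.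
Tensoring a presentation of `M` with the flat module `P` gives a projective presentation
`0 → P ⊗ K → P ⊗ F → P ⊗ M → 0`, and maps `P ⊗ K → A` are maps `P → Hom(K, A)`, which lift
along the surjection `Hom(F, A) → Hom(K, A)` because `P` is projective.
-/

open Limits

noncomputable section
namespace CategoryTheory

variable {C : Type*} [Category C] [Abelian C]

lemma ShortComplex.Exact.forall_exists_comp_eq_iff {S : ShortComplex C} (hS : S.Exact) [Epi S.g]
    {Z A : C} (ι : S.X₃ ⟶ Z) :
    (∀ f : S.X₂ ⟶ A, S.f ≫ f = 0 → ∃ g : Z ⟶ A, (S.g ≫ ι) ≫ g = f) ↔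
      ∀ φ : S.X₃ ⟶ A, ∃ ψ : Z ⟶ A, ι ≫ ψ = φ := by
  constructor
  · intro h φ
    obtain ⟨ψ, hψ⟩ := h (S.g ≫ φ) (by rw [S.zero_assoc, zero_comp])
    exact ⟨ψ, (cancel_epi S.g).mp (by rw [← Category.assoc, hψ])⟩
  · intro h f hf
    obtain ⟨ψ, hψ⟩ := h (hS.desc f hf)
    exact ⟨ψ, by rw [Category.assoc, hψ, hS.g_desc]⟩

namespace ProjectiveResolution

variable [EnoughProjectives C] (S : ShortComplex C)

abbrev syzygyStep {X Y : C} (f : X ⟶ Y) : Σ' (Z : C) (d : Z ⟶ X), d ≫ f = 0 :=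
  ⟨_, Projective.d f,
    (Category.assoc _ _ _).trans ((congrArg _ (kernel.condition f)).trans comp_zero)⟩

abbrev ofShortExactComplex : ChainComplex C ℕ :=
  ChainComplex.mk' S.X₂ (Projective.over S.X₁) (Projective.π S.X₁ ≫ S.f) syzygyStep

lemma ofShortExactComplex_d_1_0 :
    (ofShortExactComplex S).d 1 0 = Projective.π S.X₁ ≫ S.f :=
  ChainComplex.mk'_d_1_0 ..

lemma ofShortExactComplex_d_2_1 :
    (ofShortExactComplex S).d 2 1 = Projective.d (Projective.π S.X₁ ≫ S.f) := by
  simp [ofShortExactComplex, ChainComplex.mk']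

lemma ofShortExactComplex_exactAt_succ (n : ℕ) :
    (ofShortExactComplex S).ExactAt (n + 1) := by
  rw [HomologicalComplex.exactAt_iff' _ (n + 1 + 1) (n + 1) n (by simp) (by simp)]
  refine ShortComplex.exact_of_iso ?_ (exact_d_f ((ofShortExactComplex S).d (n + 1) n))
  refine ShortComplex.isoMk (ChainComplex.mk'XIso S.X₂ (Projective.over S.X₁)
    (Projective.π S.X₁ ≫ S.f) syzygyStep n).symm (Iso.refl _) (Iso.refl _) ?_ ?_
  · exact ((Iso.eq_inv_comp _).mpr (ChainComplex.mk'_d ..).symm).symm.trans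
      (Category.comp_id _).symm
  · exact (Category.id_comp _).trans (Category.comp_id _).symm

instance [Projective S.X₂] (n : ℕ) : Projective ((ofShortExactComplex S).X n) := by
  obtain (_ | _ | _ | n) := n
  · assumption
  all_goals apply Projective.projective_over

variable {S} in
def ofShortExact [Projective S.X₂] (hS : S.ShortExact) : ProjectiveResolution S.X₃ where
  complex := ofShortExactComplex S
  π := (ChainComplex.toSingle₀Equiv _ _).symm ⟨S.g, by
    rw [ofShortExactComplex_d_1_0]
    exact (Category.assoc _ _ _).trans ((congrArg _ S.zero).trans comp_zero)⟩
  quasiIso := ⟨fun n => by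
    cases n
    · rw [ChainComplex.quasiIsoAt₀_iff, ShortComplex.quasiIso_iff_of_zeros']
      · let T := ShortComplex.mk (Projective.π S.X₁ ≫ S.f) S.g (by simp)
        have hT : T.Exact :=
          (ShortComplex.exact_iff_of_epi_of_isIso_of_mono (S₁ := T) (S₂ := S)
            { τ₁ := Projective.π S.X₁, τ₂ := 𝟙 _, τ₃ := 𝟙 _ }).2 hS.exact
        refine (ShortComplex.exact_and_epi_g_iff_of_iso ?_).2 ⟨hT, hS.epi_g⟩
        refine ShortComplex.isoMk (Iso.refl _) (Iso.refl _) (Iso.refl _) ?_ ?_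
        · exact (Category.id_comp _).trans
            ((ofShortExactComplex_d_1_0 S).symm.trans (Category.comp_id _).symm)
        · exact (Category.id_comp _).trans ((ChainComplex.toSingle₀Equiv_symm_apply_f_zero
            (C := ofShortExactComplex S) S.g _).symm.trans (Category.comp_id _).symm)
      all_goals rfl
    · rw [quasiIsoAt_iff_exactAt']
      · apply ofShortExactComplex_exactAt_succ
      · apply ChainComplex.exactAt_succ_single_obj⟩

variable (R : Type*) [Ring R] [Linear R C]

lemma isZero_ext_one_iff_of_shortExact {S : ShortComplex C} (hS : S.ShortExact) [Projective S.X₂]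
    (A : C) : IsZero (((Ext R C 1).obj (Opposite.op S.X₃)).obj A) ↔
      ∀ φ : S.X₁ ⟶ A, ∃ ψ : S.X₂ ⟶ A, S.f ≫ ψ = φ := by
  let K := (ofShortExact hS).complex.linearYonedaObj R A
  rw [((ofShortExact hS).isoExt 1 A).isZero_iff, ← HomologicalComplex.exactAt_iff_isZero_homology,
    HomologicalComplex.exactAt_iff' K 0 1 2 (by simp) (by simp), ShortComplex.moduleCat_exact_iff]
  change (∀ f : Projective.over S.X₁ ⟶ A, (ofShortExactComplex S).d 2 1 ≫ f = 0 →
    ∃ g : S.X₂ ⟶ A, (ofShortExactComplex S).d 1 0 ≫ g = f) ↔ _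
  rw [ofShortExactComplex_d_2_1, ofShortExactComplex_d_1_0]
  -- `S.f` is mono, so `π ≫ S.f` and `π` have the same kernel.
  have := hS.mono_f
  have hzero : Projective.d (Projective.π S.X₁ ≫ S.f) ≫ Projective.π S.X₁ = 0 := by
    rw [← cancel_mono S.f, Category.assoc, zero_comp]
    exact (syzygyStep _).2.2
  have hexact : (ShortComplex.mk _ _ hzero).Exact :=
    (ShortComplex.exact_iff_of_epi_of_isIso_of_mono (S₁ := ShortComplex.mk _ _ hzero)
      (S₂ := ShortComplex.mk _ (Projective.π S.X₁ ≫ S.f) (syzygyStep _).2.2)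
      { τ₁ := 𝟙 _, τ₂ := 𝟙 _, τ₃ := S.f }).2 (exact_d_f (Projective.π S.X₁ ≫ S.f))
  exact hexact.forall_exists_comp_eq_iff S.f

end ProjectiveResolution
end CategoryTheory
end

theorem LinearMap.surjective_lcomp_lTensor {R P K N A : Type*} [CommSemiring R]
    [AddCommMonoid P] [Module R P] [Module.Projective R P] [AddCommMonoid K] [Module R K]
    [AddCommMonoid N] [Module R N] [AddCommMonoid A] [Module R A] {i : K →ₗ[R] N}
    (hi : Function.Surjective (LinearMap.lcomp R A i)) :
    Function.Surjective (LinearMap.lcomp R A (i.lTensor P)) := by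
  intro φ
  obtain ⟨ψ, hψ⟩ := Module.projective_lifting_property _ (TensorProduct.curry φ) hi
  refine ⟨TensorProduct.lift ψ, TensorProduct.ext' fun p k => ?_⟩
  simpa using LinearMap.congr_fun (LinearMap.congr_fun hψ p) k

section Module

open CategoryTheory

variable {R : Type u} [CommRing R]

theorem subsingleton_extMod_one_iff_surjective_lcomp {K F X A : Type u}
    [AddCommGroup K] [Module R K] [AddCommGroup F] [Module R F] [Module.Projective R F]
    [AddCommGroup X] [Module R X] [AddCommGroup A] [Module R A]
    {f : K →ₗ[R] F} {g : F →ₗ[R] X} (hf : Function.Injective f) (hg : Function.Surjective g)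
    (hfg : Function.Exact f g) :
    Subsingleton (extMod R X A 1) ↔ Function.Surjective (LinearMap.lcomp R A f) := by
  let S := ShortComplex.moduleCatMk f g hfg.linearMap_comp_eq_zero
  have hS : S.ShortExact := ModuleCat.shortComplex_shortExact S hfg hf hg
  have : Projective S.X₂ := (IsProjective.iff_projective F).mp ‹_›
  rw [← ModuleCat.isZero_iff_subsingleton, extMod]
  refine (ProjectiveResolution.isZero_ext_one_iff_of_shortExact R hS (ModuleCat.of R A)).trans ?_
  constructor
  · intro h φ
    obtain ⟨ψ, hψ⟩ := h (ModuleCat.ofHom φ)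
    exact ⟨ψ.hom, congrArg ModuleCat.Hom.hom hψ⟩
  · intro h φ
    obtain ⟨ψ, hψ⟩ := h φ.hom
    exact ⟨ModuleCat.ofHom ψ, ModuleCat.hom_ext hψ⟩

open scoped TensorProduct in
theorem subsingleton_extMod_one_tensor_of_projective {M P A : Type u}
    [AddCommGroup M] [Module R M] [AddCommGroup P] [Module R P] [Module.Projective R P]
    [AddCommGroup A] [Module R A] (hM : Subsingleton (extMod R M A 1)) :
    Subsingleton (extMod R (P ⊗[R] M) A 1) := by
  let p : (M →₀ R) →ₗ[R] M := Finsupp.linearCombination R id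
  have hp : Function.Surjective p := Finsupp.linearCombination_id_surjective R M
  let i := (LinearMap.ker p).subtype
  have hi : Function.Injective i := (LinearMap.ker p).injective_subtype
  have hexact : Function.Exact i p := LinearMap.exact_subtype_ker_map p
  have hlift : Function.Surjective (LinearMap.lcomp R A i) :=
    (subsingleton_extMod_one_iff_surjective_lcomp (K := LinearMap.ker p) hi hp hexact).1 hM
  have hi' := Module.Flat.lTensor_preserves_injective_linearMap (M := P) i hi
  have hp' := LinearMap.lTensor_surjective P hp
  have hexact' := Module.Flat.lTensor_exact P (N := LinearMap.ker p) hexact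
  refine (subsingleton_extMod_one_iff_surjective_lcomp hi' hp' hexact').2 ?_
  exact LinearMap.surjective_lcomp_lTensor hlift

end Module

open scoped TensorProduct in
/-- If `M` is `w`-FP-projective and `P` is projective, then `P ⊗ M` is `w`-FP-projective. -/
theorem wFPProjective_tensor (R : Type u) [CommRing R]
    (M : Type u) [AddCommGroup M] [Module R M] (hM : IsWFPProjective R M)
    (P : Type u) [AddCommGroup P] [Module R P] (hP : Module.Projective R P) :
    IsWFPProjective R (P ⊗[R] M) :=
  fun A _ _ hA => subsingleton_extMod_one_tensor_of_projective (hM A hA)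
end

section
/- Let R be a coherent ring and 0 → A → B → C → 0 an exact sequence of R-modules with A absolutely w-pure. Then B is absolutely w-pure if and only if C is absolutely w-pure. -/
open CategoryTheory

universe u

def IsCoherentRing (R : Type u) [CommRing R] : Prop :=
  ∀ I : Ideal R, I.FG → Module.FinitePresentation R I

/-! GV-torsion modules are closed under quotients and, because GV ideals are closed under
products, under extensions. Applying this to the long exact sequence
`Ext¹(N, A) → Ext¹(N, B) → Ext¹(N, C) → Ext²(N, A)` for a finitely presented `N`, the only
missing input is that `Ext²(N, A)` is GV-torsion. Over a coherent ring, `N` has a presentation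
`0 → K → Rᵐ → N → 0` with `K` finitely presented, and dimension shifting gives
`Ext²(N, A) ≅ Ext¹(K, A)`, which is GV-torsion since `A` is absolutely `w`-pure. -/

section GV

variable {R : Type u} [CommRing R] {J J₁ J₂ : Ideal R}

lemma isGVIdeal_top : IsGVIdeal R ⊤ := by
  refine ⟨Module.Finite.fg_top, fun r s h => ?_, fun φ => ⟨φ ⟨1, trivial⟩, ?_⟩⟩
  · simpa using LinearMap.congr_fun h ⟨1, trivial⟩
  · ext ⟨x, hx⟩
    have hx1 : (⟨x, hx⟩ : (⊤ : Ideal R)) = x • ⟨1, trivial⟩ := by ext; simp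
    simp [hx1, mul_comm]

namespace IsGVIdeal

noncomputable def homEquiv (hJ : IsGVIdeal R J) : R ≃ₗ[R] (J →ₗ[R] R) :=
  LinearEquiv.ofBijective (LinearMap.toSpanSingleton R _ J.subtype) hJ.2

@[simp]
lemma homEquiv_apply (hJ : IsGVIdeal R J) (r : R) (x : J) : hJ.homEquiv r x = r * x := rfl

lemma mul (h₁ : IsGVIdeal R J₁) (h₂ : IsGVIdeal R J₂) : IsGVIdeal R (J₁ * J₂) := by
  refine ⟨h₁.1.mul h₂.1, fun r s hrs => ?_, fun φ => ?_⟩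
  · refine h₁.homEquiv.injective (LinearMap.ext fun a => h₂.homEquiv.injective
      (LinearMap.ext fun b => ?_))
    simpa [mul_assoc] using LinearMap.congr_fun hrs ⟨a * b, Ideal.mul_mem_mul a.2 b.2⟩
  -- A map `J₁ J₂ → R` is a bilinear map `J₁ × J₂ → R`: use the GV property of `J₂`, then of `J₁`.
  · let B : J₁ →ₗ[R] J₂ →ₗ[R] R := TensorProduct.curry (φ ∘ₗ Submodule.mulMap' J₁ J₂)
    let B' : J₁ →ₗ[R] R := h₂.homEquiv.symm.toLinearMap ∘ₗ B
    set r := h₁.homEquiv.symm B'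
    have hr (a : J₁) (b : J₂) : r * (a * b) = B a b := by
      have h₁a := LinearMap.congr_fun (h₁.homEquiv.apply_symm_apply B') a
      have h₂b := LinearMap.congr_fun (h₂.homEquiv.apply_symm_apply (B a)) b
      simp only [homEquiv_apply] at h₁a h₂b
      rw [← mul_assoc, h₁a]
      exact h₂b
    refine ⟨r, LinearMap.ext fun ⟨z, hz⟩ => ?_⟩
    induction hz using Submodule.mul_induction_on' with
    | mem_mul_mem a ha b hb => exact hr ⟨a, ha⟩ ⟨b, hb⟩
    | add x hx y hy ihx ihy =>
      simp only [LinearMap.smul_apply, Submodule.coe_subtype, smul_eq_mul] at ihx ihy ⊢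
      rw [mul_add, ihx, ihy, ← map_add]
      rfl

lemma prod {ι : Type*} {s : Finset ι} {J : ι → Ideal R} (h : ∀ i ∈ s, IsGVIdeal R (J i)) :
    IsGVIdeal R (∏ i ∈ s, J i) :=
  Finset.prod_induction _ _ (fun _ _ => mul) (Ideal.one_eq_top (R := R) ▸ isGVIdeal_top) h

end IsGVIdeal

namespace IsGVTorsion

variable {M₁ M₂ M₃ : Type u} [AddCommGroup M₁] [Module R M₁] [AddCommGroup M₂] [Module R M₂]
  [AddCommGroup M₃] [Module R M₃]

lemma of_surjective (h : IsGVTorsion R M₁) (e : M₁ →ₗ[R] M₂) (he : Function.Surjective e) :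
    IsGVTorsion R M₂ := by
  intro x
  obtain ⟨y, rfl⟩ := he x
  obtain ⟨J, hJ, hJy⟩ := h y
  exact ⟨J, hJ, fun j hj => by rw [← map_smul, hJy j hj, map_zero]⟩

lemma of_exact (h₁ : IsGVTorsion R M₁) (h₃ : IsGVTorsion R M₃) {u : M₁ →ₗ[R] M₂}
    {v : M₂ →ₗ[R] M₃} (huv : Function.Exact u v) : IsGVTorsion R M₂ := by
  intro x
  obtain ⟨J, hJ, hJx⟩ := h₃ (v x)
  obtain ⟨s, hs⟩ := hJ.1
  have hmem (a : s) : ∃ y, u y = (a : R) • x :=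
    (huv _).1 (by rw [map_smul, hJx _ (hs ▸ Ideal.subset_span a.2)])
  -- The generators `a` of `J` move `x` into `u(M₁)`; the GV ideal `∏ J'` kills all the preimages.
  choose y hy using hmem
  choose J' hJ' hJ'y using fun a => h₁ (y a)
  refine ⟨(∏ a ∈ s.attach, J' a) * J, (IsGVIdeal.prod fun a _ => hJ' a).mul hJ, fun j hj => ?_⟩
  suffices (∏ a ∈ s.attach, J' a) * J ≤ LinearMap.ker (LinearMap.toSpanSingleton R M₂ x) from
    this hj
  refine Submodule.mul_le.2 fun m hm n hn => ?_
  suffices J ≤ LinearMap.ker (LinearMap.toSpanSingleton R M₂ (m • x)) by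
    simpa [mul_comm m n, mul_smul] using this hn
  rw [← hs, Ideal.span_le]
  intro a ha
  have hma : m ∈ J' ⟨a, ha⟩ := Ideal.prod_le_inf.trans (Finset.inf_le (Finset.mem_attach _ _)) hm
  simp only [SetLike.mem_coe, LinearMap.mem_ker, LinearMap.toSpanSingleton_apply]
  rw [smul_comm, ← hy ⟨a, ha⟩, ← map_smul, hJ'y _ m hma, map_zero]

end IsGVTorsion

end GV

section Ext

open Limits

variable {R : Type*} [Ring R] {C : Type*} [Category C] [Abelian C] [Linear R C]

variable (R) in
def ChainComplex.linearYonedaMap (P : ChainComplex C ℕ) {Y Z : C} (φ : Y ⟶ Z) :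
    P.linearYonedaObj R Y ⟶ P.linearYonedaObj R Z where
  f _ := ModuleCat.ofHom (Linear.rightComp R _ φ)
  comm' i j _ := by
    ext (ψ : P.X i ⟶ Y)
    exact (Category.assoc (P.d j i) ψ φ).symm

variable (R) in
def ChainComplex.linearYonedaShortComplex (P : ChainComplex C ℕ) (S : ShortComplex C) :
    ShortComplex (CochainComplex (ModuleCat R) ℕ) :=
  ShortComplex.mk (P.linearYonedaMap R S.f) (P.linearYonedaMap R S.g) (by
    ext n (ψ : P.X n ⟶ S.X₁)
    exact (Category.assoc ψ S.f S.g).trans ((ψ ≫= S.zero).trans comp_zero))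

lemma ChainComplex.shortExact_linearYonedaShortComplex (P : ChainComplex C ℕ)
    [∀ n, Projective (P.X n)] {S : ShortComplex C} (hS : S.ShortExact) :
    (P.linearYonedaShortComplex R S).ShortExact := by
  have := hS.mono_f
  have := hS.epi_g
  refine HomologicalComplex.shortExact_of_degreewise_shortExact _ fun n => .mk' ?_ ?_ ?_
  · rw [ShortComplex.moduleCat_exact_iff]
    intro (ψ : P.X n ⟶ S.X₂) hψ
    exact ⟨hS.exact.lift ψ hψ, hS.exact.lift_f ψ hψ⟩
  · exact (ModuleCat.mono_iff_injective _).2 fun (ψ ψ' : P.X n ⟶ S.X₁) h => (cancel_mono S.f).1 h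
  · exact (ModuleCat.epi_iff_surjective _).2 fun (φ : P.X n ⟶ S.X₃) =>
      ⟨Projective.factorThru φ S.g, Projective.factorThru_comp φ S.g⟩

lemma CategoryTheory.ShortComplex.Exact.function_exact_of_iso {T : ShortComplex (ModuleCat R)}
    (hT : T.Exact) {X₁ X₂ X₃ : ModuleCat R} (e₁ : X₁ ≅ T.X₁) (e₂ : X₂ ≅ T.X₂) (e₃ : X₃ ≅ T.X₃) :
    Function.Exact (e₁.hom ≫ T.f ≫ e₂.inv).hom (e₂.hom ≫ T.g ≫ e₃.inv).hom := by
  let T' := ShortComplex.mk (e₁.hom ≫ T.f ≫ e₂.inv) (e₂.hom ≫ T.g ≫ e₃.inv) (by simp)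
  have hT' : T'.Exact :=
    ShortComplex.exact_of_iso (ShortComplex.isoMk e₁ e₂ e₃ (by simp [T']) (by simp [T'])).symm hT
  exact (ShortComplex.ShortExact.moduleCat_exact_iff_function_exact T').1 hT'

lemma CategoryTheory.ShortComplex.ShortExact.exists_exact_ext [EnoughProjectives C]
    {S : ShortComplex C} (hS : S.ShortExact) (X : C) (n : ℕ) :
    ∃ (α : ((Ext R C n).obj (.op X)).obj S.X₁ ⟶ ((Ext R C n).obj (.op X)).obj S.X₂)
      (β : ((Ext R C n).obj (.op X)).obj S.X₂ ⟶ ((Ext R C n).obj (.op X)).obj S.X₃)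
      (δ : ((Ext R C n).obj (.op X)).obj S.X₃ ⟶ ((Ext R C (n + 1)).obj (.op X)).obj S.X₁),
      Function.Exact α.hom β.hom ∧ Function.Exact β.hom δ.hom := by
  let P := ProjectiveResolution.of X
  have hT := P.complex.shortExact_linearYonedaShortComplex (R := R) hS
  exact ⟨_, _, _,
    (hT.homology_exact₂ n).function_exact_of_iso (P.isoExt n _) (P.isoExt n _) (P.isoExt n _),
    (hT.homology_exact₃ n (n + 1) rfl).function_exact_of_iso (P.isoExt n _) (P.isoExt n _)
      (P.isoExt (n + 1) _)⟩

namespace CategoryTheory.ProjectiveResolution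

variable {S : ShortComplex C} (Q : ProjectiveResolution S.X₁)

/-- The complex `⋯ → Q₁ → Q₀ → S.X₂`, whose last map factors through `S.X₁`. -/
noncomputable abbrev spliceComplex : ChainComplex C ℕ :=
  Q.complex.augment ((Q.π.f 0 : Q.complex.X 0 ⟶ S.X₁) ≫ S.f)
    ((Category.assoc _ _ _).symm.trans ((Q.complex_d_comp_π_f_zero =≫ S.f).trans zero_comp))

lemma spliceComplex_d_one_zero_comp : Q.spliceComplex.d 1 0 ≫ S.g = 0 :=
  (Category.assoc _ _ _).trans ((_ ≫= S.zero).trans comp_zero)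

lemma exact_spliceComplex_d_one_zero (hS : S.ShortExact) :
    (ShortComplex.mk _ _ Q.spliceComplex_d_one_zero_comp).Exact := by
  let φ : ShortComplex.mk _ _ Q.spliceComplex_d_one_zero_comp ⟶ S :=
    { τ₁ := Q.π.f 0, τ₂ := 𝟙 _, τ₃ := 𝟙 _ }
  have : Epi φ.τ₁ := inferInstanceAs (Epi (Q.π.f 0))
  have : IsIso φ.τ₂ := inferInstanceAs (IsIso (𝟙 _))
  have : Mono φ.τ₃ := inferInstanceAs (Mono (𝟙 _))
  exact (ShortComplex.exact_iff_of_epi_of_isIso_of_mono φ).2 hS.exact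

lemma exact_spliceComplex_sc'_two_one_zero (hS : S.ShortExact) :
    (Q.spliceComplex.sc' 2 1 0).Exact := by
  let φ : ShortComplex.mk _ _ Q.complex_d_comp_π_f_zero ⟶ Q.spliceComplex.sc' 2 1 0 :=
    { τ₁ := 𝟙 _, τ₂ := 𝟙 _, τ₃ := S.f
      comm₁₂ := (Category.id_comp _).trans (Category.comp_id _).symm
      comm₂₃ := Category.id_comp _ }
  have : Epi φ.τ₁ := inferInstanceAs (Epi (𝟙 _))
  have : IsIso φ.τ₂ := inferInstanceAs (IsIso (𝟙 _))
  have : Mono φ.τ₃ := hS.mono_f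
  exact (ShortComplex.exact_iff_of_epi_of_isIso_of_mono φ).1 Q.exact₀

noncomputable def splice (hS : S.ShortExact) [Projective S.X₂] : ProjectiveResolution S.X₃ where
  complex := Q.spliceComplex
  projective
    | 0 => inferInstanceAs (Projective S.X₂)
    | n + 1 => inferInstanceAs (Projective (Q.complex.X n))
  π := (ChainComplex.toSingle₀Equiv _ _).symm ⟨S.g, Q.spliceComplex_d_one_zero_comp⟩
  quasiIso := ⟨fun n => by
    rcases n with _ | _ | n
    · rw [ChainComplex.quasiIsoAt₀_iff, ShortComplex.quasiIso_iff_of_zeros' _ rfl rfl rfl]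
      refine (ShortComplex.exact_and_epi_g_iff_of_iso ?_).2
        ⟨Q.exact_spliceComplex_d_one_zero hS, hS.epi_g⟩
      refine ShortComplex.isoMk (Iso.refl _) (Iso.refl _) (Iso.refl _)
        ((Category.id_comp _).trans (Category.comp_id _).symm) ?_
      simp only [Iso.refl_hom]
      erw [Category.comp_id]
      exact (Category.id_comp _).trans (ChainComplex.toSingle₀Equiv_symm_apply_f_zero
        (C := Q.spliceComplex) S.g Q.spliceComplex_d_one_zero_comp).symm
    · rw [quasiIsoAt_iff_exactAt' _ _ (ChainComplex.exactAt_succ_single_obj _ _),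
        HomologicalComplex.exactAt_iff' _ 2 1 0 (by simp) (by simp)]
      exact Q.exact_spliceComplex_sc'_two_one_zero hS
    · rw [quasiIsoAt_iff_exactAt' _ _ (ChainComplex.exactAt_succ_single_obj _ _),
        HomologicalComplex.exactAt_iff' _ (n + 3) (n + 2) (n + 1) (by simp) (by simp)]
      exact Q.exact_succ n⟩

/-- In degrees `≥ 2` the complex `Hom(Q.spliceComplex, Y)` is `Hom(Q.complex, Y)` shifted by one,
so the short complexes computing the two homologies agree definitionally. -/
noncomputable def spliceComplexHomologyIso (Y : C) (n : ℕ) :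
    (Q.spliceComplex.linearYonedaObj R Y).homology (n + 2) ≅
      (Q.complex.linearYonedaObj R Y).homology (n + 1) :=
  (Q.spliceComplex.linearYonedaObj R Y).homologyIsoSc' (n + 1) (n + 2) (n + 3) (by simp)
      (by simp) ≪≫
    ((Q.complex.linearYonedaObj R Y).homologyIsoSc' n (n + 1) (n + 2) (by simp) (by simp)).symm

end CategoryTheory.ProjectiveResolution

noncomputable def CategoryTheory.ShortComplex.ShortExact.extSuccSuccIso [EnoughProjectives C]
    {S : ShortComplex C} (hS : S.ShortExact) [Projective S.X₂] (Y : C) (n : ℕ) :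
    ((Ext R C (n + 2)).obj (.op S.X₃)).obj Y ≅ ((Ext R C (n + 1)).obj (.op S.X₁)).obj Y :=
  let Q := ProjectiveResolution.of S.X₁
  (Q.splice hS).isoExt (n + 2) Y ≪≫ Q.spliceComplexHomologyIso Y n ≪≫
    (Q.isoExt (n + 1) Y).symm

end Ext

section Coherent

variable (R : Type*) [Ring R]

def Module.IsPseudoCoherent (M : Type*) [AddCommGroup M] [Module R M] : Prop :=
  ∀ K : Submodule R M, K.FG → Module.FinitePresentation R K

variable {R} {M N : Type*} [AddCommGroup M] [Module R M] [AddCommGroup N] [Module R N]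

namespace Module.IsPseudoCoherent

lemma of_linearEquiv (h : IsPseudoCoherent R M) (e : M ≃ₗ[R] N) : IsPseudoCoherent R N := by
  intro K hK
  have := h _ (hK.map e.symm.toLinearMap)
  exact .of_equiv (e.symm.submoduleMap K).symm

lemma of_subsingleton [Subsingleton M] : IsPseudoCoherent R M :=
  fun _ _ => inferInstance

lemma prod (hM : IsPseudoCoherent R M) (hN : IsPseudoCoherent R N) :
    IsPseudoCoherent R (M × N) := by
  -- `K` is an extension of its projection to `N` by its intersection with `M`.
  intro K hK
  have : Module.Finite R K := .iff_fg.2 hK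
  let p : K →ₗ[R] N := LinearMap.snd R M N ∘ₗ K.subtype
  have := hN _ (Submodule.fg_range p)
  have hker := Module.FinitePresentation.fg_ker _ p.surjective_rangeRestrict
  let q : LinearMap.ker p.rangeRestrict →ₗ[R] M :=
    LinearMap.fst R M N ∘ₗ K.subtype ∘ₗ (LinearMap.ker p.rangeRestrict).subtype
  have hq : Function.Injective q := by
    intro x y hxy
    have hx : ((x : K) : M × N).2 = 0 := congrArg Subtype.val (LinearMap.mem_ker.1 x.2)
    have hy : ((y : K) : M × N).2 = 0 := congrArg Subtype.val (LinearMap.mem_ker.1 y.2)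
    exact Subtype.ext (Subtype.ext (Prod.ext hxy (hx.trans hy.symm)))
  have : Module.Finite R (LinearMap.ker p.rangeRestrict) := .iff_fg.2 hker
  have := hM _ (Submodule.fg_range q)
  have := Module.FinitePresentation.of_equiv (M := LinearMap.range q)
    (N := LinearMap.ker p.rangeRestrict) (LinearEquiv.ofInjective q hq).symm
  exact Module.finitePresentation_of_ker p.rangeRestrict p.surjective_rangeRestrict

lemma pi_fin (h : IsPseudoCoherent R R) : ∀ n, IsPseudoCoherent R (Fin n → R)
  | 0 => of_subsingleton
  | n + 1 => (h.prod (pi_fin h n)).of_linearEquiv (Fin.consLinearEquiv R fun _ => R)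

end Module.IsPseudoCoherent

end Coherent

section WPure

variable {R : Type u} [CommRing R]

lemma IsCoherentRing.exists_surjective_finitePresentation_ker (hR : IsCoherentRing R)
    (N : Type u) [AddCommGroup N] [Module R N] [Module.FinitePresentation R N] :
    ∃ (m : ℕ) (ρ : (Fin m → R) →ₗ[R] N), Function.Surjective ρ ∧
      Module.FinitePresentation R (LinearMap.ker ρ) := by
  obtain ⟨m, ρ, hρ⟩ := Module.Finite.exists_fin' R N
  exact ⟨m, ρ, hρ, Module.IsPseudoCoherent.pi_fin hR m _
    (Module.FinitePresentation.fg_ker ρ hρ)⟩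

lemma IsAbsolutelyWPure.isGVTorsion_extMod_two (hR : IsCoherentRing R) {A : Type u}
    [AddCommGroup A] [Module R A] (hA : IsAbsolutelyWPure R A) (N : Type u) [AddCommGroup N]
    [Module R N] [Module.FinitePresentation R N] : IsGVTorsion R (extMod R N A 2) := by
  obtain ⟨m, ρ, hρ, hK⟩ := hR.exists_surjective_finitePresentation_ker N
  let e := (LinearMap.shortExact_shortComplexKer hρ).extSuccSuccIso (R := R) (ModuleCat.of R A) 0
  exact (hA _ hK).of_surjective e.toLinearEquiv.symm.toLinearMap e.toLinearEquiv.symm.surjective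

end WPure

/-- Over a coherent ring, given `0 → A → B → C → 0` exact with `A` absolutely `w`-pure,
`B` is absolutely `w`-pure iff `C` is. -/
theorem isAbsolutelyWPure_iff_of_exact (R : Type u) [CommRing R] (hR : IsCoherentRing R)
    (A B C : Type u) [AddCommGroup A] [Module R A] [AddCommGroup B] [Module R B]
    [AddCommGroup C] [Module R C]
    (f : A →ₗ[R] B) (g : B →ₗ[R] C) (hf : Function.Injective f)
    (hg : Function.Surjective g) (hfg : Function.Exact f g)
    (hA : IsAbsolutelyWPure R A) :
    IsAbsolutelyWPure R B ↔ IsAbsolutelyWPure R C := by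
  have hS := ModuleCat.shortComplex_shortExact
    (ShortComplex.moduleCatMk f g hfg.linearMap_comp_eq_zero) hfg hf hg
  constructor
  · intro hB N _ _ hN
    obtain ⟨_, _, _, _, hBCA⟩ := hS.exists_exact_ext (R := R) (ModuleCat.of R N) 1
    exact (hB N hN).of_exact (hA.isGVTorsion_extMod_two hR N) hBCA
  · intro hC N _ _ hN
    obtain ⟨_, _, _, hABC, -⟩ := hS.exists_exact_ext (R := R) (ModuleCat.of R N) 1
    exact (hA N hN).of_exact (hC N hN) hABC
end
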